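/- (No-programming, mixed programs) Let H_d and H_p be finite-dimensional complex Hilbert spaces, let G be a unitary operator on H_d ⊗ H_p, and let W, W' be unitary operators on H_d that are not phase-equivalent. Let ρ, ρ' be density operators on H_p, and suppose that for every unit vector ψ ∈ H_d there exist density operators σ_ψ, σ'_ψ on H_p such that G(|ψ⟩⟨ψ| ⊗ ρ)G† = (W|ψ⟩⟨ψ|W†) ⊗ σ_ψ and G(|ψ⟩⟨ψ| ⊗ ρ')G† = (W'|ψ⟩⟨ψ|W'†) ⊗ σ'_ψ. Then ρρ' = 0, i.e., ρ and ρ' have orthogonal support. -/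

import Mathlib

open Matrix
open Kronecker
open scoped ComplexOrder

noncomputable section

/-- The rank-one projection `|ψ⟩⟨ψ|` onto a (unit) vector `ψ`. -/
def outer {n : Type*} (x : n → ℂ) : Matrix n n ℂ :=
  Matrix.of fun i j => x i * star (x j)

/-- A density operator: positive semidefinite with unit trace. -/
def IsDensity {n : Type*} [Fintype n] (M : Matrix n n ℂ) : Prop :=
  M.PosSemidef ∧ M.trace = 1

/-- Two unitaries are phase-equivalent if they differ by a global phase `e^{iθ}`. -/
def PhaseEquiv {n : Type*} (W W' : Matrix n n ℂ) : Prop :=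
  ∃ θ : ℝ, W = Complex.exp (θ * Complex.I) • W'

/-! For a vector `u`, the hypothesis on `ρ` gives `G (ψ ⊗ ρu) = Wψ ⊗ t(ψ)` for every `ψ` (rescale
to a unit vector and apply `|ψ⟩⟨ψ| ⊗ ρ` to `ψ ⊗ u`). As `G` and `W` are isometries,
`⟨ψ, φ⟩ ⟨ρu, ρu⟩ = ⟨ψ, φ⟩ ⟨t(ψ), t(φ)⟩`, which forces `t(ψ) = t(φ)` first for non-orthogonal
`ψ, φ` and then, going through `ψ + φ`, for all nonzero ones. With the analogous constant `s`
for `ρ'`, comparing `G (ψ ⊗ ρy)` with `G (φ ⊗ ρ'x)` gives `⟨ψ, φ⟩ ⟨ρy, ρ'x⟩ = ⟨ψ, W†W'φ⟩ ⟨t, s⟩`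
for all `ψ, φ`. So if `⟨y, ρρ'x⟩ = ⟨ρy, ρ'x⟩` is nonzero, `W†W'` is a nonzero multiple of the
identity, hence a phase. -/

namespace Matrix

lemma star_mulVec_dotProduct_mulVec {R m n : Type*} [CommSemiring R] [StarRing R] [Fintype m]
    [Fintype n] (A B : Matrix m n R) (x y : n → R) :
    star (A *ᵥ x) ⬝ᵥ B *ᵥ y = star x ⬝ᵥ (Aᴴ * B) *ᵥ y := by
  rw [star_mulVec, dotProduct_mulVec, dotProduct_mulVec, vecMul_vecMul]

lemma ext_of_forall_star_dotProduct_mulVec {R m n : Type*} [NonAssocSemiring R] [StarRing R]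
    [Fintype m] [Fintype n] [DecidableEq m] [DecidableEq n] {A B : Matrix m n R}
    (h : ∀ x y, star x ⬝ᵥ A *ᵥ y = star x ⬝ᵥ B *ᵥ y) : A = B := by
  ext i j
  have := h (Pi.single i 1) (Pi.single j 1)
  rwa [Pi.star_single, star_one, mulVec_single_one, mulVec_single_one, single_one_dotProduct,
    single_one_dotProduct] at this

end Matrix

section vecKron

variable {R l m n k : Type*}

def vecKron [Mul R] (x : m → R) (y : n → R) : m × n → R := fun i => x i.1 * y i.2

@[simp]
lemma vecKron_zero_left [MulZeroClass R] (y : n → R) : vecKron (0 : m → R) y = 0 := by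
  ext; simp [vecKron]

lemma vecKron_smul_left [Semigroup R] (c : R) (x : m → R) (y : n → R) :
    vecKron (c • x) y = c • vecKron x y := by
  ext; simp [vecKron, mul_assoc]

variable [CommSemiring R] [Fintype m] [Fintype n]

lemma star_vecKron_dotProduct_vecKron [StarRing R] (x x' : m → R) (y y' : n → R) :
    star (vecKron x y) ⬝ᵥ vecKron x' y' = (star x ⬝ᵥ x') * (star y ⬝ᵥ y') := by
  simp only [dotProduct, vecKron, Pi.star_apply, Fintype.sum_prod_type, star_mul',
    Finset.sum_mul_sum]
  exact Finset.sum_congr rfl fun i _ => Finset.sum_congr rfl fun j _ => by ring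

lemma kronecker_mulVec_vecKron (A : Matrix l m R) (B : Matrix k n R) (x : m → R) (y : n → R) :
    (A ⊗ₖ B) *ᵥ vecKron x y = vecKron (A *ᵥ x) (B *ᵥ y) := by
  ext ⟨i, j⟩
  simp only [mulVec, dotProduct, vecKron, kroneckerMap_apply, Fintype.sum_prod_type,
    Finset.sum_mul_sum]
  exact Finset.sum_congr rfl fun i' _ => Finset.sum_congr rfl fun j' _ => by ring

lemma exists_vecMulVec_kronecker_mulVec_eq_vecKron (w v : m → R) (σ : Matrix n n R)
    (z : m × n → R) : ∃ t, (vecMulVec w v ⊗ₖ σ) *ᵥ z = vecKron w t := by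
  refine ⟨fun j => ∑ i : m × n, v i.1 * σ j i.2 * z i, ?_⟩
  ext ⟨i, j⟩
  simp only [mulVec, dotProduct, vecKron, kroneckerMap_apply, vecMulVec_apply, Finset.mul_sum]
  exact Finset.sum_congr rfl fun i' _ => by ring

lemma dotProduct_mul_dotProduct_eq_of_mulVec_vecKron [StarRing R] [DecidableEq m]
    [DecidableEq n] {G : Matrix (m × n) (m × n) R} (hG : Gᴴ * G = 1) {V V' : Matrix m m R}
    {ψ φ : m → R} {a b a' b' : n → R} (ha : G *ᵥ vecKron ψ a = vecKron (V *ᵥ ψ) a')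
    (hb : G *ᵥ vecKron φ b = vecKron (V' *ᵥ φ) b') :
    (star ψ ⬝ᵥ φ) * (star a ⬝ᵥ b) = (star ψ ⬝ᵥ (Vᴴ * V') *ᵥ φ) * (star a' ⬝ᵥ b') := by
  rw [← star_vecKron_dotProduct_vecKron, ← one_mulVec (vecKron φ b), ← hG,
    ← star_mulVec_dotProduct_mulVec, ha, hb, star_vecKron_dotProduct_vecKron,
    star_mulVec_dotProduct_mulVec]

end vecKron

section FactorConstancy

variable {𝕜 m n : Type*} [RCLike 𝕜] [Fintype m] [Fintype n] {T : (m → 𝕜) → (n → 𝕜)}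
  {v : n → 𝕜}

lemma apply_eq_apply_of_star_dotProduct_ne_zero
    (hT : ∀ ψ φ, (star ψ ⬝ᵥ φ) * (star v ⬝ᵥ v) = (star ψ ⬝ᵥ φ) * (star (T ψ) ⬝ᵥ T φ))
    {ψ φ : m → 𝕜} (hψφ : star ψ ⬝ᵥ φ ≠ 0) : T ψ = T φ := by
  have hself : ∀ χ, star χ ⬝ᵥ χ ≠ 0 → star (T χ) ⬝ᵥ T χ = star v ⬝ᵥ v := fun χ hχ =>
    (mul_left_cancel₀ hχ (hT χ χ)).symm
  have hφψ : star φ ⬝ᵥ ψ ≠ 0 := by rwa [star_dotProduct, star_ne_zero]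
  have hψ : star ψ ⬝ᵥ ψ ≠ 0 := by
    rw [Ne, dotProduct_star_self_eq_zero]; rintro rfl; simp at hψφ
  have hφ : star φ ⬝ᵥ φ ≠ 0 := by
    rw [Ne, dotProduct_star_self_eq_zero]; rintro rfl; simp at hψφ
  have hψφ' := (mul_left_cancel₀ hψφ (hT ψ φ)).symm
  have hφψ' := (mul_left_cancel₀ hφψ (hT φ ψ)).symm
  rw [← sub_eq_zero, ← dotProduct_star_self_eq_zero, star_sub, sub_dotProduct, dotProduct_sub,
    dotProduct_sub, hself ψ hψ, hself φ hφ, hψφ', hφψ', sub_self]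

lemma apply_eq_apply_of_ne_zero
    (hT : ∀ ψ φ, (star ψ ⬝ᵥ φ) * (star v ⬝ᵥ v) = (star ψ ⬝ᵥ φ) * (star (T ψ) ⬝ᵥ T φ))
    {ψ φ : m → 𝕜} (hψ : ψ ≠ 0) (hφ : φ ≠ 0) : T ψ = T φ := by
  by_cases hψφ : star ψ ⬝ᵥ φ = 0
  · have h₁ : star ψ ⬝ᵥ (ψ + φ) ≠ 0 := by
      rwa [dotProduct_add, hψφ, add_zero, Ne, dotProduct_star_self_eq_zero]
    have h₂ : star (ψ + φ) ⬝ᵥ φ ≠ 0 := by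
      rwa [star_add, add_dotProduct, hψφ, zero_add, Ne, dotProduct_star_self_eq_zero]
    rw [apply_eq_apply_of_star_dotProduct_ne_zero hT h₁,
      apply_eq_apply_of_star_dotProduct_ne_zero hT h₂]
  · exact apply_eq_apply_of_star_dotProduct_ne_zero hT hψφ

lemma exists_forall_mulVec_vecKron_eq [DecidableEq m] [DecidableEq n]
    {G : Matrix (m × n) (m × n) 𝕜} (hG : Gᴴ * G = 1) {V : Matrix m m 𝕜} (hV : Vᴴ * V = 1)
    {e : n → 𝕜} (h : ∀ ψ, ∃ t, G *ᵥ vecKron ψ e = vecKron (V *ᵥ ψ) t) :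
    ∃ t, ∀ ψ, G *ᵥ vecKron ψ e = vecKron (V *ᵥ ψ) t := by
  choose t ht using h
  have hT : ∀ ψ φ, (star ψ ⬝ᵥ φ) * (star e ⬝ᵥ e) = (star ψ ⬝ᵥ φ) * (star (t ψ) ⬝ᵥ t φ) :=
    fun ψ φ => by
      simpa [hV] using dotProduct_mul_dotProduct_eq_of_mulVec_vecKron hG (ht ψ) (ht φ)
  refine ⟨t 1, fun ψ => ?_⟩
  rcases eq_or_ne ψ 0 with rfl | hψ
  · simp
  · obtain ⟨i, -⟩ := Function.ne_iff.mp hψ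
    have h1 : (1 : m → 𝕜) ≠ 0 := Function.ne_iff.mpr ⟨i, one_ne_zero⟩
    rw [ht ψ, apply_eq_apply_of_ne_zero hT hψ h1]

end FactorConstancy

lemma outer_eq_vecMulVec {n : Type*} (x : n → ℂ) : outer x = vecMulVec x (star x) := rfl

lemma mul_outer_mul_conjTranspose {n : Type*} [Fintype n] (W : Matrix n n ℂ) (ψ : n → ℂ) :
    W * outer ψ * Wᴴ = outer (W *ᵥ ψ) := by
  rw [outer_eq_vecMulVec, outer_eq_vecMulVec, mul_vecMulVec, vecMulVec_mul, ← star_mulVec]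

lemma outer_mulVec_self {n : Type*} [Fintype n] {ψ : EuclideanSpace ℂ n} (hψ : ‖ψ‖ = 1) :
    outer ψ *ᵥ ψ = ψ := by
  have h : star (ψ : n → ℂ) ⬝ᵥ ψ = 1 := by
    rw [dotProduct_comm, ← EuclideanSpace.inner_eq_star_dotProduct, inner_self_eq_norm_sq_to_K,
      hψ]
    simp
  rw [outer_eq_vecMulVec, vecMulVec_mulVec, h, MulOpposite.op_one, one_smul]

section Programs

variable {m n : Type*} [Fintype m] [Fintype n] [DecidableEq m] [DecidableEq n]
  {G : Matrix (m × n) (m × n) ℂ}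

lemma exists_mulVec_vecKron_eq_of_conj_eq (hG : Gᴴ * G = 1) {ψ : EuclideanSpace ℂ m}
    (hψ : ‖ψ‖ = 1) {τ σ : Matrix n n ℂ} {w : m → ℂ}
    (h : G * (outer ψ ⊗ₖ τ) * Gᴴ = outer w ⊗ₖ σ) (u : n → ℂ) :
    ∃ t, G *ᵥ vecKron ψ (τ *ᵥ u) = vecKron w t := by
  have hcomm : (outer w ⊗ₖ σ) * G = G * (outer ψ ⊗ₖ τ) := by
    rw [← h, Matrix.mul_assoc _ Gᴴ G, hG, Matrix.mul_one]
  obtain ⟨t, ht⟩ := exists_vecMulVec_kronecker_mulVec_eq_vecKron w (star w) σ (G *ᵥ vecKron ψ u)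
  refine ⟨t, ?_⟩
  -- `G (ψ ⊗ τu) = G (|ψ⟩⟨ψ| ⊗ τ) (ψ ⊗ u) = (|w⟩⟨w| ⊗ σ) G (ψ ⊗ u)`
  rw [← outer_mulVec_self hψ, ← kronecker_mulVec_vecKron, mulVec_mulVec, ← hcomm,
    ← mulVec_mulVec, ← ht, outer_eq_vecMulVec]

lemma exists_mulVec_vecKron_eq_of_forall_conj_eq (hG : Gᴴ * G = 1) {τ : Matrix n n ℂ}
    {V : Matrix m m ℂ}
    (h : ∀ ψ : EuclideanSpace ℂ m, ‖ψ‖ = 1 →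
      ∃ σ, G * (outer ψ ⊗ₖ τ) * Gᴴ = (V * outer ψ * Vᴴ) ⊗ₖ σ)
    (u : n → ℂ) (ψ : m → ℂ) : ∃ t, G *ᵥ vecKron ψ (τ *ᵥ u) = vecKron (V *ᵥ ψ) t := by
  rcases eq_or_ne ψ 0 with rfl | hψ
  · exact ⟨0, by simp⟩
  set c : ℂ := (‖WithLp.toLp 2 ψ‖ : ℂ)
  have hc : c ≠ 0 := by simpa [c] using hψ
  have hunit : ‖c⁻¹ • WithLp.toLp 2 ψ‖ = 1 := norm_smul_inv_norm (by simpa using hψ)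
  obtain ⟨σ, hσ⟩ := h _ hunit
  rw [mul_outer_mul_conjTranspose] at hσ
  obtain ⟨t, ht⟩ := exists_mulVec_vecKron_eq_of_conj_eq hG hunit hσ u
  refine ⟨t, ?_⟩
  have hψc : ψ = c • (c⁻¹ • WithLp.toLp 2 ψ).ofLp := by simp [smul_smul, hc]
  rw [hψc, vecKron_smul_left, mulVec_smul, ht, mulVec_smul, vecKron_smul_left]

end Programs

section PhaseEquiv

variable {n : Type*} [Fintype n] [DecidableEq n] {W W' : Matrix n n ℂ}

lemma phaseEquiv_of_eq_smul (hW : W ∈ unitaryGroup n ℂ) (hW' : W' ∈ unitaryGroup n ℂ)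
    {c : ℂ} (h : W = c • W') : PhaseEquiv W W' := by
  cases isEmpty_or_nonempty n
  · exact ⟨0, Subsingleton.elim _ _⟩
  have hc : c * star c = 1 := by
    have hWW := mem_unitaryGroup_iff.mp hW
    rw [h, star_smul, smul_mul_smul_comm, mem_unitaryGroup_iff.mp hW'] at hWW
    simpa using congrFun₂ hWW (Classical.arbitrary n) (Classical.arbitrary n)
  have hnorm : ‖c‖ = 1 := by
    rw [Complex.star_def, Complex.mul_conj'] at hc
    exact (pow_eq_one_iff_of_nonneg (norm_nonneg c) two_ne_zero).mp (by exact_mod_cast hc)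
  refine ⟨c.arg, ?_⟩
  rw [← c.norm_mul_exp_arg_mul_I, hnorm] at h
  simpa using h

lemma phaseEquiv_of_forall_dotProduct (hW : W ∈ unitaryGroup n ℂ)
    (hW' : W' ∈ unitaryGroup n ℂ) {a b : ℂ} (ha : a ≠ 0)
    (h : ∀ ψ φ : n → ℂ, (star ψ ⬝ᵥ φ) * a = (star ψ ⬝ᵥ (Wᴴ * W') *ᵥ φ) * b) :
    PhaseEquiv W W' := by
  have hscalar : a • (1 : Matrix n n ℂ) = b • (Wᴴ * W') :=
    ext_of_forall_star_dotProduct_mulVec fun ψ φ => by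
      rw [smul_mulVec, smul_mulVec, one_mulVec, dotProduct_smul, dotProduct_smul, smul_eq_mul,
        smul_eq_mul, mul_comm, h, mul_comm]
  refine phaseEquiv_of_eq_smul hW hW' (c := b / a) ?_
  have hWW : W * Wᴴ = 1 := mem_unitaryGroup_iff.mp hW
  have hWW' : W * (Wᴴ * W') = W' := by rw [← Matrix.mul_assoc, hWW, Matrix.one_mul]
  rw [← hWW', div_eq_inv_mul, ← smul_smul, ← Matrix.mul_smul, ← hscalar, Matrix.mul_smul,
    Matrix.mul_one, smul_smul, inv_mul_cancel₀ ha, one_smul]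

end PhaseEquiv

theorem stmt7_general {d p : Type*} [Fintype d] [Fintype p] [DecidableEq d] [DecidableEq p]
    (G : Matrix (d × p) (d × p) ℂ) (hG : G ∈ Matrix.unitaryGroup (d × p) ℂ)
    (W W' : Matrix d d ℂ)
    (hW : W ∈ Matrix.unitaryGroup d ℂ) (hW' : W' ∈ Matrix.unitaryGroup d ℂ)
    (hne : ¬ PhaseEquiv W W')
    (ρ ρ' : Matrix p p ℂ) (hρ : IsDensity ρ)
    (hprog : ∀ ψ : EuclideanSpace ℂ d, ‖ψ‖ = 1 →
      ∃ σ σ' : Matrix p p ℂ, IsDensity σ ∧ IsDensity σ' ∧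
        G * (outer ψ ⊗ₖ ρ) * Gᴴ = (W * outer ψ * Wᴴ) ⊗ₖ σ ∧
        G * (outer ψ ⊗ₖ ρ') * Gᴴ = (W' * outer ψ * W'ᴴ) ⊗ₖ σ') :
    ρ * ρ' = 0 := by
  have hGG : Gᴴ * G = 1 := mem_unitaryGroup_iff'.mp hG
  have hprogρ : ∀ ψ : EuclideanSpace ℂ d, ‖ψ‖ = 1 →
      ∃ σ, G * (outer ψ ⊗ₖ ρ) * Gᴴ = (W * outer ψ * Wᴴ) ⊗ₖ σ := fun ψ hψ => by
    obtain ⟨σ, -, -, -, h, -⟩ := hprog ψ hψ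
    exact ⟨σ, h⟩
  have hprogρ' : ∀ ψ : EuclideanSpace ℂ d, ‖ψ‖ = 1 →
      ∃ σ', G * (outer ψ ⊗ₖ ρ') * Gᴴ = (W' * outer ψ * W'ᴴ) ⊗ₖ σ' := fun ψ hψ => by
    obtain ⟨-, σ', -, -, -, h⟩ := hprog ψ hψ
    exact ⟨σ', h⟩
  refine ext_of_forall_star_dotProduct_mulVec fun y x => ?_
  rw [zero_mulVec, dotProduct_zero, ← hρ.1.1, ← star_mulVec_dotProduct_mulVec]
  by_contra hκ
  obtain ⟨t, ht⟩ := exists_forall_mulVec_vecKron_eq hGG (mem_unitaryGroup_iff'.mp hW)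
    (exists_mulVec_vecKron_eq_of_forall_conj_eq hGG hprogρ y)
  obtain ⟨s, hs⟩ := exists_forall_mulVec_vecKron_eq hGG (mem_unitaryGroup_iff'.mp hW')
    (exists_mulVec_vecKron_eq_of_forall_conj_eq hGG hprogρ' x)
  exact hne (phaseEquiv_of_forall_dotProduct hW hW' hκ fun ψ φ =>
    dotProduct_mul_dotProduct_eq_of_mulVec_vecKron hGG (ht ψ) (hs φ))

/-- No-programming, mixed programs: let `G` be a unitary on `H_d ⊗ H_p` and
`W, W'` unitaries on `H_d` that are not phase-equivalent.  If `ρ, ρ'` are density operators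
on `H_p` such that for every unit `ψ ∈ H_d` there are density operators `σ_ψ, σ'_ψ` with
`G(|ψ⟩⟨ψ| ⊗ ρ)G† = (W|ψ⟩⟨ψ|W†) ⊗ σ_ψ` and `G(|ψ⟩⟨ψ| ⊗ ρ')G† = (W'|ψ⟩⟨ψ|W'†) ⊗ σ'_ψ`,
then `ρρ' = 0`, i.e. `ρ` and `ρ'` have orthogonal support. -/
theorem stmt7 {d p : Type*} [Fintype d] [Fintype p] [DecidableEq d] [DecidableEq p]
    (G : Matrix (d × p) (d × p) ℂ) (hG : G ∈ Matrix.unitaryGroup (d × p) ℂ)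
    (W W' : Matrix d d ℂ)
    (hW : W ∈ Matrix.unitaryGroup d ℂ) (hW' : W' ∈ Matrix.unitaryGroup d ℂ)
    (hne : ¬ PhaseEquiv W W')
    (ρ ρ' : Matrix p p ℂ) (hρ : IsDensity ρ) (hρ' : IsDensity ρ')
    (hprog : ∀ ψ : EuclideanSpace ℂ d, ‖ψ‖ = 1 →
      ∃ σ σ' : Matrix p p ℂ, IsDensity σ ∧ IsDensity σ' ∧
        G * (outer ψ ⊗ₖ ρ) * Gᴴ = (W * outer ψ * Wᴴ) ⊗ₖ σ ∧
        G * (outer ψ ⊗ₖ ρ') * Gᴴ = (W' * outer ψ * W'ᴴ) ⊗ₖ σ') :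
    ρ * ρ' = 0 :=
  stmt7_general G hG W W' hW hW' hne ρ ρ' hρ hprog

end
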